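/- Suppose P2 = Σᵢ,ⱼ aᵢⱼ hᵢhⱼ is a homogeneous quadratic polynomial in h1,...,h8 with {H, P2} = 0 identically, where H = (h1²+h2²)/2 and {·,·} is the Lie–Poisson bracket of the free nilpotent Lie algebra of rank 2, step 4. Then P2 = Σᵢ,ⱼ₌₆⁸ aᵢⱼhᵢhⱼ + bH for some constants aᵢⱼ, b ∈ ℝ, i.e. P2 is a real combination of H and quadratic monomials in h6, h7, h8. -/

import Mathlib

/-!
Write `P = quadForm a`, with indices as in the paper (`h₁` is `h 0`). Its gradient is
`(a + aᵀ) h`, and `{H, ·}` differentiates along the Hamiltonian vector field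
`X_H = (-h₂h₃, h₁h₃, h₁h₄ + h₂h₅, h₁h₆ + h₂h₇, h₁h₇ + h₂h₈, 0, 0, 0)`, so
`{H, P}(h) = ⟨(a + aᵀ) h, X_H(h)⟩` is a cubic form. Its coefficients, read off by polarizing at
basis vectors, must all vanish; this kills every entry of `a + aᵀ` outside the `{6,7,8}` block
except the two equal entries at `(1,1)` and `(2,2)`. So `P = 2 a₁₁ H` plus the quadratic form of
the `{6,7,8}` block.
-/

noncomputable section

abbrev Lstar : Type := Fin 8 → ℝ

/-- Nonzero part of the structure constants (0-indexed):
[X1,X2]=X3, [X1,X3]=X4, [X2,X3]=X5, [X1,X4]=X6, [X1,X5]=[X2,X4]=X7, [X2,X5]=X8. -/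
noncomputable def posPart (i j k : Fin 8) : ℝ :=
  if (i, j, k) = (0, 1, 2) ∨ (i, j, k) = (0, 2, 3) ∨ (i, j, k) = (1, 2, 4) ∨
     (i, j, k) = (0, 3, 5) ∨ (i, j, k) = (0, 4, 6) ∨ (i, j, k) = (1, 3, 6) ∨
     (i, j, k) = (1, 4, 7)
  then (1 : ℝ) else 0

noncomputable def c (i j k : Fin 8) : ℝ := posPart i j k - posPart j i k

noncomputable def pd (f : Lstar → ℝ) (h : Lstar) (i : Fin 8) : ℝ :=
  fderiv ℝ f h (Pi.single i 1)

noncomputable def poisson (f g : Lstar → ℝ) (h : Lstar) : ℝ :=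
  ∑ i, ∑ j, ∑ k, c i j k * h k * pd f h i * pd g h j

noncomputable def Ham (h : Lstar) : ℝ := ((h 0)^2 + (h 1)^2) / 2

open Matrix
open QuadraticMap (polar)

section QuadForm

variable {ι R : Type*} [Fintype ι]

def quadForm [CommSemiring R] (a : Matrix ι ι R) (h : ι → R) : R :=
  ∑ i, ∑ j, a i j * h i * h j

theorem quadForm_add [CommSemiring R] (a b : Matrix ι ι R) :
    quadForm (a + b) = quadForm a + quadForm b := by
  funext h
  simp only [quadForm, Matrix.add_apply, Pi.add_apply, add_mul, Finset.sum_add_distrib]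

theorem quadForm_smul [CommSemiring R] (c : R) (a : Matrix ι ι R) :
    quadForm (c • a) = c • quadForm a := by
  funext h
  simp only [quadForm, Matrix.smul_apply, Pi.smul_apply, smul_eq_mul, Finset.mul_sum, mul_assoc]

theorem two_mul_quadForm [CommSemiring R] (a : Matrix ι ι R) (h : ι → R) :
    2 * quadForm a h = quadForm (a + aᵀ) h := by
  simp only [quadForm, Matrix.add_apply, transpose_apply, add_mul, Finset.sum_add_distrib]
  rw [Finset.sum_comm (f := fun i j => a j i * h i * h j)]
  simp only [two_mul, mul_right_comm]

theorem quadForm_eq_of_add_transpose_eq [CommRing R] [IsAddTorsionFree R]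
    {a b : Matrix ι ι R} (hab : a + aᵀ = b + bᵀ) : quadForm a = quadForm b := by
  funext h
  have := two_mul_quadForm a h
  rw [hab, ← two_mul_quadForm] at this
  exact (nsmul_right_injective two_ne_zero) (by simpa [two_nsmul, two_mul] using this)

theorem fderiv_quadForm (a : Matrix ι ι ℝ) (h v : ι → ℝ) :
    fderiv ℝ (quadForm a) h v = ((a + aᵀ) *ᵥ h) ⬝ᵥ v := by
  have hderiv : HasFDerivAt (quadForm a)
      (∑ i, ∑ j, ((a i j * h i) • ContinuousLinearMap.proj j +
        h j • a i j • (ContinuousLinearMap.proj i : (ι → ℝ) →L[ℝ] ℝ))) h :=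
    HasFDerivAt.fun_sum fun i _ => HasFDerivAt.fun_sum fun j _ =>
      ((hasFDerivAt_apply (𝕜 := ℝ) i h).const_mul (a i j)).fun_mul
        (hasFDerivAt_apply (𝕜 := ℝ) j h)
  rw [hderiv.fderiv]
  simp only [_root_.sum_apply, _root_.add_apply, _root_.smul_apply,
    ContinuousLinearMap.proj_apply, smul_eq_mul, dotProduct, mulVec, Matrix.add_apply,
    transpose_apply, add_mul, Finset.sum_add_distrib, Finset.sum_mul]
  rw [Finset.sum_comm (f := fun i j => a i j * h i * v j), add_comm]
  congr 1
  all_goals refine Finset.sum_congr rfl fun _ _ => Finset.sum_congr rfl fun _ _ => by ring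

end QuadForm

theorem pd_quadForm (a : Matrix (Fin 8) (Fin 8) ℝ) (h : Lstar) :
    pd (quadForm a) h = (a + aᵀ) *ᵥ h := by
  funext k
  rw [pd, fderiv_quadForm, dotProduct_single, mul_one]

def hamMatrix : Matrix (Fin 8) (Fin 8) ℝ := diagonal ![2⁻¹, 2⁻¹, 0, 0, 0, 0, 0, 0]

theorem Ham_eq_quadForm : Ham = quadForm hamMatrix := by
  funext h
  simp [Ham, quadForm, hamMatrix, Fin.sum_univ_eight, diagonal]
  ring

theorem pd_Ham (h : Lstar) : pd Ham h = ![h 0, h 1, 0, 0, 0, 0, 0, 0] := by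
  rw [Ham_eq_quadForm, pd_quadForm]
  funext i
  fin_cases i <;> simp [hamMatrix, mulVec, dotProduct, Fin.sum_univ_eight, diagonal] <;> ring

def hamField (h : Lstar) : Lstar :=
  ![-(h 1 * h 2), h 0 * h 2, h 0 * h 3 + h 1 * h 4, h 0 * h 5 + h 1 * h 6, h 0 * h 6 + h 1 * h 7,
    0, 0, 0]

theorem poisson_Ham_apply (f : Lstar → ℝ) (h : Lstar) :
    poisson Ham f h = pd f h ⬝ᵥ hamField h := by
  simp only [poisson, pd_Ham, c, _root_.posPart, Fin.sum_univ_eight, hamField, dotProduct]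
  simp
  ring

def hamCubic (s : Matrix (Fin 8) (Fin 8) ℝ) (h : Lstar) : ℝ := (s *ᵥ h) ⬝ᵥ hamField h

theorem poisson_Ham_quadForm (a : Matrix (Fin 8) (Fin 8) ℝ) :
    poisson Ham (quadForm a) = hamCubic (a + aᵀ) := by
  funext h
  rw [poisson_Ham_apply, pd_quadForm, hamCubic]

theorem polar_polar_hamCubic (s : Matrix (Fin 8) (Fin 8) ℝ) (x y z : Lstar) :
    polar (fun w => polar (hamCubic s) w z) x y =
      (s *ᵥ x) ⬝ᵥ polar hamField y z + (s *ᵥ y) ⬝ᵥ polar hamField x z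
        + (s *ᵥ z) ⬝ᵥ polar hamField x y := by
  simp only [polar, hamCubic, hamField, mulVec, dotProduct, Fin.sum_univ_eight, Pi.add_apply,
    Pi.sub_apply]
  simp
  ring

def centerBlock (a : Matrix (Fin 8) (Fin 8) ℝ) : Matrix (Fin 8) (Fin 8) ℝ :=
  of fun i j => if 5 ≤ (i : ℕ) ∧ 5 ≤ (j : ℕ) then a i j else 0

set_option maxHeartbeats 600000 in
theorem add_transpose_eq_of_poisson_Ham_quadForm_eq_zero (a : Matrix (Fin 8) (Fin 8) ℝ)
    (ha : poisson Ham (quadForm a) = 0) :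
    a + aᵀ = (centerBlock a + (2 * a 0 0) • hamMatrix)
      + (centerBlock a + (2 * a 0 0) • hamMatrix)ᵀ := by
  rw [poisson_Ham_quadForm] at ha
  -- `(p, q, r)` stands for the monomial `h p * h q * h r`: polarizing the cubic at the basis
  -- vectors `e p, e q, e r` gives a positive multiple of its coefficient.
  have hcoeff : ∀ t ∈ [((0 : Fin 8), (0 : Fin 8), (2 : Fin 8)), (0, 0, 3), (0, 0, 5), (0, 0, 6),
      (1, 1, 4), (1, 1, 6), (1, 1, 7), (0, 1, 2), (0, 2, 3), (0, 3, 3), (0, 3, 4), (0, 4, 5),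
      (0, 4, 6), (1, 3, 6), (0, 2, 5), (0, 2, 6), (0, 2, 7), (1, 2, 5), (1, 2, 6), (1, 2, 7),
      (0, 3, 5), (0, 3, 6), (0, 3, 7), (0, 5, 5), (0, 5, 6), (1, 5, 7), (0, 5, 7), (0, 6, 6),
      (0, 6, 7)],
      polar (fun w => polar (hamCubic (a + aᵀ)) w (Pi.single t.2.2 1)) (Pi.single t.1 1)
        (Pi.single t.2.1 1) = 0 := by
    intro t _
    simp [polar, ha]
  simp only [List.forall_mem_cons, polar_polar_hamCubic, mulVec_single_one] at hcoeff
  simp [polar, hamField, dotProduct, Fin.sum_univ_eight, Pi.single_apply] at hcoeff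
  ext i j
  fin_cases i <;> fin_cases j <;> simp [centerBlock, hamMatrix, diagonal] <;> linarith

/-- A homogeneous quadratic integral P2 = Σᵢⱼ aᵢⱼhᵢhⱼ of the vertical flow
is a combination of H and quadratic monomials in h6, h7, h8. -/
theorem quadratic_integrals (a : Fin 8 → Fin 8 → ℝ)
    (hint : poisson Ham (fun h => ∑ i, ∑ j, a i j * h i * h j) = 0) :
    ∃ (a' : Fin 8 → Fin 8 → ℝ) (b : ℝ),
      (∀ i j : Fin 8, a' i j ≠ 0 → 5 ≤ (i : ℕ) ∧ 5 ≤ (j : ℕ)) ∧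
      ∀ h : Lstar, ∑ i, ∑ j, a i j * h i * h j
        = (∑ i, ∑ j, a' i j * h i * h j) + b * Ham h := by
  refine ⟨centerBlock a, 2 * a 0 0, fun i j hij => ?_, fun h => ?_⟩
  · by_contra hc
    exact hij (if_neg hc)
  · have hsymm := add_transpose_eq_of_poisson_Ham_quadForm_eq_zero a hint
    have := congrFun (quadForm_eq_of_add_transpose_eq hsymm) h
    rwa [quadForm_add, quadForm_smul, ← Ham_eq_quadForm, Pi.add_apply, Pi.smul_apply,
      smul_eq_mul] at this

end
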